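/- Let A be a commutative unital R-algebra, D = (D₁,…,Dₙ) R-derivations of A, and P(ξ) a polynomial over A whose constant term a₀ = P(0) is neither zero nor a zero-divisor of A. Then the radical of Ker P(D), i.e. the set of u ∈ A with u^m ∈ Ker P(D) for all sufficiently large m, equals the nilradical of A. -/

import Mathlib

/-!
Fix `u`. Every operator `L` built from left multiplications and derivations satisfies
`L (u ^ m) = ∑_{j ≤ m} C(m, j) • u ^ (m - j) * b j` for a finitely supported `b` independent of
`m`, and `b 0 = L 1`, which is `a₀` for `L = P(D)`. If `P(D) (u ^ m) = 0` for all large `m`, then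
multiplying the identities for `d + 1` consecutive `m` by suitable powers of `u` gives
`∑_j C(m, j) • c j = 0` with `c j = u ^ (K - j) * b j`; Pascal's rule makes all `c j` vanish, so
`u ^ K * a₀ = 0` and `u` is nilpotent because `a₀` is regular.
-/

/-- The differential operator `P(D)` obtained from `P ∈ A[ξ₁,…,ξₙ]` by substituting the
derivations `Dᵢ` for `ξᵢ`, with the coefficients written on the left. -/
noncomputable def mvDiffOp {R A : Type*} [CommRing R] [CommRing A] [Algebra R A]
    {n : ℕ} (D : Fin n → Derivation R A A) (P : MvPolynomial (Fin n) A) :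
    Module.End R A :=
  ∑ m ∈ P.support,
    LinearMap.mulLeft R (P.coeff m) *
      ((List.finRange n).map fun i => (D i).toLinearMap ^ m i).prod

open Finset Filter

theorem Finset.sum_range_choose_succ_smul {M : Type*} [AddCommMonoid M] (c : ℕ → M) (d m : ℕ) :
    ∑ j ∈ range (d + 1), (m + 1).choose j • c j =
      ∑ j ∈ range (d + 1), m.choose j • c j + ∑ j ∈ range d, m.choose j • c (j + 1) := by
  simp only [sum_range_succ' _ d, Nat.choose_succ_succ', add_smul, sum_add_distrib,
    Nat.choose_zero_right]
  abel

theorem eq_zero_of_sum_choose_smul_eq_zero {M : Type*} [AddCommMonoid M] {c : ℕ → M} {d N : ℕ}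
    (h : ∀ m ∈ Ico N (N + d), ∑ j ∈ range d, m.choose j • c j = 0) : ∀ j < d, c j = 0 := by
  induction d generalizing c with
  | zero => intro j hj; omega
  | succ d ih =>
    have hshift : ∀ j < d, c (j + 1) = 0 := by
      refine ih fun m hm => ?_
      have hm' : m + 1 ∈ Ico N (N + (d + 1)) := by simp only [mem_Ico] at hm ⊢; omega
      have := sum_range_choose_succ_smul c d m
      rwa [h _ hm', h m (by simp only [mem_Ico] at hm ⊢; omega), zero_add, eq_comm] at this
    have h0 : c 0 = 0 := by
      have := h N (by simp)
      rwa [sum_range_succ', sum_eq_zero fun j hj => by rw [hshift j (mem_range.1 hj), smul_zero],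
        zero_add, Nat.choose_zero_right, one_smul] at this
    rintro (_ | j) hj
    · exact h0
    · exact hshift j (by omega)

theorem sum_range_choose_smul_pow_shift {A : Type*} [Semiring A] (u : A) (x : ℕ → A) (m : ℕ) :
    ∑ j ∈ range (m + 1), m.choose j • ((m - j) • (u ^ (m - j - 1) * x j)) =
      ∑ j ∈ range (m + 1), m.choose j • (u ^ (m - j) * (j • x (j - 1))) := by
  rw [sum_range_succ, sum_range_succ' _ m]
  simp only [Nat.sub_self, zero_smul, smul_zero, add_zero, mul_zero]
  refine sum_congr rfl fun j _ => ?_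
  rw [Nat.add_sub_cancel, mul_smul_comm, smul_smul, smul_smul, ← Nat.choose_succ_right_eq,
    Nat.sub_sub]

section
variable {R A : Type*} [CommRing R] [CommRing A] [Algebra R A]

/-- Evaluating at `m = 0` forces `b 0 = L 1`. -/
def HasBinomialExpansion (u : A) (L : Module.End R A) : Prop :=
  ∃ b : ℕ → A, (∀ᶠ j in atTop, b j = 0) ∧
    ∀ m, L (u ^ m) = ∑ j ∈ range (m + 1), m.choose j • (u ^ (m - j) * b j)

namespace HasBinomialExpansion

variable {u : A} {L L' : Module.End R A}

theorem zero : HasBinomialExpansion u (0 : Module.End R A) :=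
  ⟨0, Eventually.of_forall fun _ => rfl, fun m => by simp⟩

theorem one : HasBinomialExpansion u (1 : Module.End R A) := by
  refine ⟨Pi.single 0 1, ?_, fun m => ?_⟩
  · filter_upwards [eventually_gt_atTop 0] with j hj
    exact Pi.single_eq_of_ne hj.ne' _
  · rw [sum_eq_single 0 (fun j _ hj => by simp [Pi.single_eq_of_ne hj]) (by simp)]
    simp

theorem add (h : HasBinomialExpansion u L) (h' : HasBinomialExpansion u L') :
    HasBinomialExpansion u (L + L') := by
  obtain ⟨b, hb, hL⟩ := h
  obtain ⟨b', hb', hL'⟩ := h'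
  refine ⟨b + b', by filter_upwards [hb, hb'] with j hj hj'; simp [hj, hj'], fun m => ?_⟩
  simp only [LinearMap.add_apply, hL, hL', Pi.add_apply, mul_add, smul_add, sum_add_distrib]

theorem mulLeft (c : A) (h : HasBinomialExpansion u L) :
    HasBinomialExpansion u (LinearMap.mulLeft R c * L) := by
  obtain ⟨b, hb, hL⟩ := h
  refine ⟨fun j => c * b j, by filter_upwards [hb] with j hj; simp [hj], fun m => ?_⟩
  simp only [Module.End.mul_apply, LinearMap.mulLeft_apply, hL, mul_sum, mul_smul_comm,
    mul_left_comm c]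

theorem derivation_mul (δ : Derivation R A A) (h : HasBinomialExpansion u L) :
    HasBinomialExpansion u (δ.toLinearMap * L) := by
  obtain ⟨b, hb, hL⟩ := h
  refine ⟨fun j => δ (b j) + j • (δ u * b (j - 1)), ?_, fun m => ?_⟩
  · filter_upwards [hb, (tendsto_sub_atTop_nat 1).eventually hb] with j hj hj'
    simp [hj, hj']
  · have leibniz : ∀ j, δ (u ^ (m - j) * b j) =
        u ^ (m - j) * δ (b j) + (m - j) • (u ^ (m - j - 1) * (δ u * b j)) := fun j => by
      rw [Derivation.leibniz, Derivation.leibniz_pow, smul_eq_mul, smul_eq_mul, smul_eq_mul,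
        nsmul_eq_mul, nsmul_eq_mul]
      ring
    simp only [Module.End.mul_apply, Derivation.coeFn_coe, hL, map_sum, map_nsmul,
      leibniz, smul_add, sum_add_distrib, sum_range_choose_smul_pow_shift, mul_add]

end HasBinomialExpansion

def binomialExpansionStabilizer (u : A) : Subsemiring (Module.End R A) where
  carrier := {T | ∀ L, HasBinomialExpansion u L → HasBinomialExpansion u (T * L)}
  mul_mem' hS hT L hL := by rw [mul_assoc]; exact hS _ (hT _ hL)
  one_mem' L hL := by rwa [one_mul]
  add_mem' hS hT L hL := by rw [add_mul]; exact (hS _ hL).add (hT _ hL)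
  zero_mem' L _ := by rw [zero_mul]; exact .zero

theorem hasBinomialExpansion_mvDiffOp {n : ℕ} (D : Fin n → Derivation R A A)
    (P : MvPolynomial (Fin n) A) (u : A) : HasBinomialExpansion u (mvDiffOp D P) := by
  suffices mvDiffOp D P ∈ binomialExpansionStabilizer u by
    simpa using this 1 .one
  refine Subsemiring.sum_mem _ fun m _ => Subsemiring.mul_mem _
    (fun L hL => hL.mulLeft _) (Subsemiring.list_prod_mem _ fun T hT => ?_)
  obtain ⟨i, -, rfl⟩ := List.mem_map.1 hT
  exact Subsemiring.pow_mem _ (fun L hL => hL.derivation_mul (D i)) _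

theorem HasBinomialExpansion.exists_pow_mul_apply_one_eq_zero {u : A} {L : Module.End R A}
    (h : HasBinomialExpansion u L) {N : ℕ} (hN : ∀ m ≥ N, L (u ^ m) = 0) :
    ∃ k, u ^ k * L 1 = 0 := by
  obtain ⟨b, hb, hL⟩ := h
  obtain ⟨d, hd⟩ := eventually_atTop.1 hb
  set M := max N d
  have hc : ∀ m ∈ Ico M (M + (d + 1)),
      ∑ j ∈ range (d + 1), m.choose j • (u ^ (M + d - j) * b j) = 0 := by
    intro m hm
    rw [mem_Ico] at hm
    have hdm : d ≤ m := le_trans (le_max_right _ _) hm.1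
    have hsum := hL m
    rw [hN m (le_trans (le_max_left _ _) hm.1),
      ← sum_subset (range_subset_range.2 (Nat.succ_le_succ hdm)) fun j _ hj => by
        rw [hd j (by simp only [mem_range, not_lt] at hj; omega), mul_zero, smul_zero]] at hsum
    rw [← mul_zero (u ^ (M + d - m)), hsum, mul_sum]
    refine sum_congr rfl fun j hj => ?_
    rw [mul_smul_comm, ← mul_assoc, ← pow_add]
    congr 3
    simp only [mem_range] at hj
    omega
  have hL1 : L 1 = b 0 := by simpa using hL 0
  refine ⟨M + d, ?_⟩
  simpa [hL1] using eq_zero_of_sum_choose_smul_eq_zero hc 0 (Nat.succ_pos d)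

theorem Derivation.pow_apply_one (δ : Derivation R A A) (k : ℕ) :
    (δ.toLinearMap ^ k) 1 = if k = 0 then 1 else 0 := by
  cases k <;> simp [pow_succ, Derivation.coeFn_coe]

theorem mvDiffOp_apply_one {n : ℕ} (D : Fin n → Derivation R A A) (P : MvPolynomial (Fin n) A) :
    mvDiffOp D P 1 = P.coeff 0 := by
  have hprod : ∀ (k : Fin n →₀ ℕ) (l : List (Fin n)),
      (l.map fun i => (D i).toLinearMap ^ k i).prod 1 = if ∀ i ∈ l, k i = 0 then 1 else 0 := by
    intro k l
    induction l with
    | nil => simp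
    | cons i l ih =>
      rw [List.map_cons, List.prod_cons, Module.End.mul_apply, ih]
      by_cases hl : ∀ i ∈ l, k i = 0
      · rw [if_pos hl, Derivation.pow_apply_one]
        simp [eq_true hl]
      · rw [if_neg hl, map_zero, if_neg fun h => hl fun j hj => h j (List.mem_cons_of_mem i hj)]
  classical
  have hzero (k : Fin n →₀ ℕ) : (∀ i, k i = 0) ↔ k = 0 := by simp [Finsupp.ext_iff]
  simp only [mvDiffOp, LinearMap.sum_apply, Module.End.mul_apply, LinearMap.mulLeft_apply, hprod,
    List.mem_finRange, true_imp_iff, hzero, mul_ite, mul_one, mul_zero, sum_ite_eq',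
    MvPolynomial.mem_support_iff, ite_eq_left_iff, not_not]
  exact fun h => h.symm

end

theorem stmt5_general {R A : Type*} [CommRing R] [CommRing A] [Algebra R A]
    (n : ℕ) (D : Fin n → Derivation R A A)
    (P : MvPolynomial (Fin n) A)
    (hreg : ∀ b : A, P.coeff 0 * b = 0 → b = 0) :
    {u : A | ∃ N : ℕ, ∀ m ≥ N, mvDiffOp D P (u ^ m) = 0} =
      {u : A | IsNilpotent u} := by
  ext u
  constructor
  · rintro ⟨N, hN⟩
    obtain ⟨k, hk⟩ := (hasBinomialExpansion_mvDiffOp D P u).exists_pow_mul_apply_one_eq_zero hN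
    rw [mvDiffOp_apply_one, mul_comm] at hk
    exact ⟨k, hreg _ hk⟩
  · rintro ⟨k, hk⟩
    exact ⟨k, fun m hm => by rw [pow_eq_zero_of_le hm hk, map_zero]⟩

/-- Let `A` be a commutative unital `R`-algebra, `D = (D₁,…,Dₙ)` `R`-derivations of `A`,
and `P(ξ)` a polynomial over `A` whose constant term `a₀ = P(0)` is neither zero nor a
zero-divisor. Then the radical of `Ker P(D)` equals the nilradical of `A`. -/
theorem stmt5 {R A : Type*} [CommRing R] [CommRing A] [Algebra R A]
    (n : ℕ) (D : Fin n → Derivation R A A)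
    (P : MvPolynomial (Fin n) A)
    (ha0 : P.coeff 0 ≠ 0) (hreg : ∀ b : A, P.coeff 0 * b = 0 → b = 0) :
    {u : A | ∃ N : ℕ, ∀ m ≥ N, mvDiffOp D P (u ^ m) = 0} =
      {u : A | IsNilpotent u} :=
  stmt5_general n D P hreg
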